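/- Let R be a K-algebra such that either GKdim(R) < ∞, or R has just infinite GK-dimension (i.e. GKdim(R) = ∞ but GKdim(R/I) < ∞ for every nonzero two-sided ideal I). Then R satisfies the ascending chain condition on completely prime two-sided ideals. In particular, if R is a domain with GKdim(R) < ∞, then every strictly ascending chain of completely prime two-sided ideals of R has length at most GKdim(R). -/

import Mathlib

open scoped ENNReal

open Filter in
/-- Gelfand–Kirillov dimension of a `K`-algebra `A`:
`sup_V limsup_n log (dim_K (K·1 + V)^n) / log n` over finite-dimensional subspaces `V ⊆ A`. -/
noncomputable def gkDim (K A : Type*) [Field K] [Ring A] [Algebra K A] : ℝ≥0∞ :=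
  ⨆ (V : Submodule K A) (_ : FiniteDimensional K ↥V),
    Filter.limsup
      (fun n : ℕ =>
        ENNReal.ofReal (Real.log (Module.finrank K ↥((1 ⊔ V) ^ n)) / Real.log n))
      Filter.atTop

/-- The quotient of `A` by a ring congruence (e.g. by a two-sided ideal) is again
a `K`-algebra. -/
noncomputable instance quotAlgebra {K A : Type*} [CommSemiring K] [Ring A] [Algebra K A]
    (c : RingCon A) : Algebra K c.Quotient :=
  RingHom.toAlgebra'
    { toFun := fun k => ((algebraMap K A k : A) : c.Quotient)
      map_one' := by show ((algebraMap K A 1 : A) : c.Quotient) = 1; rw [map_one]; rfl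
      map_mul' := by
        intro x y
        show ((algebraMap K A (x * y) : A) : c.Quotient) = _
        rw [map_mul]; rfl
      map_zero' := by show ((algebraMap K A 0 : A) : c.Quotient) = 0; rw [map_zero]; rfl
      map_add' := by
        intro x y
        show ((algebraMap K A (x + y) : A) : c.Quotient) = _
        rw [map_add]; rfl }
    (fun k x => by
      induction x using Quotient.inductionOn' with
      | h a =>
        show ((algebraMap K A k : A) : c.Quotient) * (a : c.Quotient)
            = (a : c.Quotient) * ((algebraMap K A k : A) : c.Quotient)
        rw [← RingCon.coe_mul, ← RingCon.coe_mul, Algebra.commutes])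

/-- A two-sided ideal `P` of `R` is completely prime if `R/P` is a domain, i.e. `P` is
proper and `x y ∈ P` implies `x ∈ P` or `y ∈ P`. -/
def IsCompletelyPrime {R : Type*} [Ring R] (P : TwoSidedIdeal R) : Prop :=
  (1 : R) ∉ P ∧ ∀ x y : R, x * y ∈ P → x ∈ P ∨ y ∈ P

/-!
If `Q₀ < Q₁ < ⋯ < Q_k` are completely prime and `x_i ∈ Q_{i+1} \ Q_i`, the ordered monomials
`x_{k-1}^{a_{k-1}} ⋯ x_0^{a_0}` are linearly independent modulo `Q₀`. Write a relation as
`∑_j f_j x₀^j` with each `f_j` a combination of monomials in `x₁, …, x_{k-1}`. Modulo `Q₁` it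
reduces to `f₀`, so `f₀ = 0` by induction on `k`; the rest is `(∑_j f_{j+1} x₀^j) x₀ ∈ Q₀`, and
since `Q₀` is completely prime and `x₀ ∉ Q₀` the factor `x₀` cancels, so induction on the
`x₀`-degree applies. There are at least `(n/k)^k` such monomials of degree `≤ n`, hence
`k ≤ GKdim (R/Q₀)` and `k ≤ GKdim R`. So chains of completely prime ideals have length bounded
by `GKdim R` when it is finite, and when `R` is just infinite a chain `P₀ < P₁ < ⋯` is bounded
by `GKdim (R/P₁) < ∞`.
-/

open Filter Finset Finsupp

def orderedMonomial {M : Type*} [Monoid M] : {k : ℕ} → (Fin k → M) → (Fin k → ℕ) → M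
  | 0, _, _ => 1
  | _ + 1, x, a => orderedMonomial (Fin.tail x) (Fin.tail a) * x 0 ^ a 0

theorem map_orderedMonomial {M N F : Type*} [Monoid M] [Monoid N] [FunLike F M N]
    [MonoidHomClass F M N] (f : F) {k : ℕ} (x : Fin k → M) (a : Fin k → ℕ) :
    f (orderedMonomial x a) = orderedMonomial (f ∘ x) a := by
  induction k with
  | zero => exact map_one f
  | succ k ih => simp only [orderedMonomial, map_mul, map_pow, ih]; rfl

theorem orderedMonomial_mem_pow {K A : Type*} [CommSemiring K] [Semiring A] [Algebra K A]
    {W : Submodule K A} {k : ℕ} {x : Fin k → A} (hx : ∀ i, x i ∈ W) (a : Fin k → ℕ) :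
    orderedMonomial x a ∈ W ^ ∑ i, a i := by
  induction k with
  | zero => simpa [orderedMonomial] using ⟨1, map_one _⟩
  | succ k ih =>
    rw [Fin.sum_univ_succ, add_comm, pow_add]
    exact Submodule.mul_mem_mul (ih (fun i => hx i.succ) (Fin.tail a))
      (Submodule.pow_mem_pow W (hx 0) _)

section GrowthBound

variable {K A : Type*} [Field K] [Ring A] [Algebra K A]

theorem div_add_one_pow_le_finrank {k : ℕ} {x : Fin k → A}
    (hx : LinearIndependent K (orderedMonomial x)) (n : ℕ) :
    (n / k + 1) ^ k ≤ Module.finrank K ↥((1 ⊔ Submodule.span K (Set.range x)) ^ n) := by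
  set W := 1 ⊔ Submodule.span K (Set.range x)
  have hW : W.FG := by
    refine Submodule.FG.sup ?_ (Submodule.fg_span (Set.finite_range x))
    rw [Submodule.one_eq_span]
    exact Submodule.fg_span_singleton 1
  have : FiniteDimensional K ↥(W ^ n) := Module.Finite.iff_fg.mpr (hW.pow n)
  have hxW (i : Fin k) : x i ∈ W := Submodule.mem_sup_right (Submodule.subset_span ⟨i, rfl⟩)
  have hmem (t : Fin k → Fin (n / k + 1)) : orderedMonomial x (fun i => t i) ∈ W ^ n := by
    have hdeg : ∑ i, (t i : ℕ) ≤ n :=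
      calc ∑ i, (t i : ℕ) ≤ ∑ _i : Fin k, n / k := sum_le_sum fun i _ => Nat.lt_succ_iff.mp (t i).2
        _ = k * (n / k) := by simp
        _ ≤ n := Nat.mul_div_le n k
    exact pow_le_pow_right' (le_sup_left : 1 ≤ W) hdeg (orderedMonomial_mem_pow hxW _)
  have hinj : Function.Injective fun (t : Fin k → Fin (n / k + 1)) i => (t i : ℕ) :=
    fun t t' h => funext fun i => Fin.ext (congrFun h i)
  have hli : LinearIndependent K fun t => (⟨_, hmem t⟩ : ↥(W ^ n)) :=
    LinearIndependent.of_comp (W ^ n).subtype (hx.comp _ hinj)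
  simpa using hli.fintype_card_le_finrank

theorem natCast_le_limsup_log_div_log {d : ℕ → ℕ} {c : ℝ} (hc : 0 < c) (k : ℕ)
    (hd : ∀ n, c * n ^ k ≤ d n) :
    (k : ℝ≥0∞) ≤ limsup (fun n : ℕ => ENNReal.ofReal (Real.log (d n) / Real.log n)) atTop := by
  have hlower : Tendsto (fun n : ℕ => k + Real.log c / Real.log n) atTop (nhds k) := by
    simpa using tendsto_const_nhds.add
      (tendsto_const_nhds.div_atTop (Real.tendsto_log_atTop.comp tendsto_natCast_atTop_atTop))
  have hle : ∀ᶠ n : ℕ in atTop, k + Real.log c / Real.log n ≤ Real.log (d n) / Real.log n := by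
    filter_upwards [eventually_ge_atTop 2] with n hn
    have hlogn : 0 < Real.log n := Real.log_pos (by exact_mod_cast hn)
    have hpos : 0 < c * n ^ k := by positivity
    have hlog : Real.log c + k * Real.log n ≤ Real.log (d n) := by
      rw [← Real.log_pow, ← Real.log_mul hc.ne' (by positivity)]
      exact Real.log_le_log hpos (hd n)
    rw [le_div_iff₀ hlogn, add_mul, div_mul_cancel₀ _ hlogn.ne']
    linarith
  calc (k : ℝ≥0∞) = limsup (fun n : ℕ => ENNReal.ofReal (k + Real.log c / Real.log n)) atTop := by
        rw [(ENNReal.tendsto_ofReal hlower).limsup_eq, ENNReal.ofReal_natCast]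
    _ ≤ _ := limsup_le_limsup (hle.mono fun n hn => ENNReal.ofReal_le_ofReal hn)

theorem natCast_le_gkDim_of_linearIndependent {k : ℕ} {x : Fin k → A}
    (hx : LinearIndependent K (orderedMonomial x)) : (k : ℝ≥0∞) ≤ gkDim K A := by
  rcases Nat.eq_zero_or_pos k with rfl | hk
  · simp
  have hV : FiniteDimensional K (Submodule.span K (Set.range x)) :=
    FiniteDimensional.span_of_finite K (Set.finite_range x)
  unfold gkDim
  refine le_iSup₂_of_le _ hV ?_
  refine natCast_le_limsup_log_div_log (c := ((k : ℝ)⁻¹) ^ k) (by positivity) k fun n => ?_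
  have hk' : (0 : ℝ) < k := by exact_mod_cast hk
  have hdiv : (n : ℝ) / k ≤ (n / k : ℕ) + 1 := by
    have h : n ≤ (n / k + 1) * k := by rw [add_mul, one_mul]; exact (Nat.lt_div_mul_add hk).le
    rw [div_le_iff₀ hk']
    exact_mod_cast h
  calc ((k : ℝ)⁻¹) ^ k * n ^ k = ((n : ℝ) / k) ^ k := by rw [← mul_pow, inv_mul_eq_div]
    _ ≤ (((n / k + 1) ^ k : ℕ) : ℝ) := by push_cast; gcongr
    _ ≤ _ := by exact_mod_cast div_add_one_pow_le_finrank hx n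

end GrowthBound

section CompletelyPrimeChains

variable {K R : Type*} [Field K] [Ring R] [Algebra K R]

theorem TwoSidedIdeal.coe_quotient_eq_zero_iff {I : TwoSidedIdeal R} {r : R} :
    (r : I.ringCon.Quotient) = 0 ↔ r ∈ I := by
  rw [← RingCon.coe_zero, RingCon.eq, I.mem_iff]

theorem linearIndependent_quotient_iff {ι : Type*} {v : ι → R} {I : TwoSidedIdeal R} :
    (LinearIndependent K fun i => (v i : I.ringCon.Quotient)) ↔
      ∀ l : ι →₀ K, linearCombination K v l ∈ I → l = 0 := by
  -- `RingCon.mkₐ` is linear for Mathlib's own `Algebra K c.Quotient`, whose scalar action is not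
  -- definitionally that of `quotAlgebra`.
  let π : R →ₐ[K] I.ringCon.Quotient := { I.ringCon.mk' with commutes' := fun _ => rfl }
  have hπ (l : ι →₀ K) : linearCombination K (fun i => (v i : I.ringCon.Quotient)) l =
      (linearCombination K v l : I.ringCon.Quotient) :=
    (apply_linearCombination K π.toLinearMap v l).symm
  simp only [linearIndependent_iff, hπ, TwoSidedIdeal.coe_quotient_eq_zero_iff]

theorem mem_of_sum_mul_pow_mem {P Q : TwoSidedIdeal R} (hPQ : P ≤ Q) (hP : IsCompletelyPrime P)
    {x : R} (hxQ : x ∈ Q) (hxP : x ∉ P) {f : ℕ → R} (hf : ∀ j, f j ∈ Q → f j ∈ P) {n : ℕ}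
    (h : ∑ j ∈ range n, f j * x ^ j ∈ P) : ∀ j < n, f j ∈ P := by
  induction n generalizing f with
  | zero => intro j hj; omega
  | succ n ih =>
    set S := ∑ j ∈ range n, f (j + 1) * x ^ j
    have hsplit : ∑ j ∈ range (n + 1), f j * x ^ j = S * x + f 0 := by
      rw [sum_range_succ', Finset.sum_mul]
      simp only [pow_succ, mul_assoc, pow_zero, mul_one]
    rw [hsplit] at h
    have h0 : f 0 ∈ P := hf 0 (by simpa using Q.sub_mem (hPQ h) (Q.mul_mem_left S x hxQ))
    have hS : S ∈ P := ((hP.2 S x) (by simpa using P.sub_mem h h0)).resolve_right hxP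
    rintro (_ | j) hj
    · exact h0
    · exact ih (f := fun j => f (j + 1)) (fun j => hf (j + 1)) hS j (by omega)

theorem linearIndependent_quotient_mul_pow {ι : Type*} {P Q : TwoSidedIdeal R} (hPQ : P ≤ Q)
    (hP : IsCompletelyPrime P) {x : R} (hxQ : x ∈ Q) (hxP : x ∉ P) {v : ι → R}
    (hv : LinearIndependent K fun i => (v i : Q.ringCon.Quotient)) :
    LinearIndependent K fun p : ℕ × ι => ((v p.2 * x ^ p.1 : R) : P.ringCon.Quotient) := by
  rw [linearIndependent_quotient_iff] at hv ⊢
  intro l hl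
  obtain ⟨n, hn⟩ := l.curry.support.exists_nat_subset_range
  set f : ℕ → R := fun j => linearCombination K v (l.curry j)
  have hsum : linearCombination K (fun p : ℕ × ι => v p.2 * x ^ p.1) l =
      ∑ j ∈ range n, f j * x ^ j := by
    rw [linearCombination_apply]
    refine (sum_curry_index l fun j i (c : K) => c • (v i * x ^ j)).symm.trans ?_
    rw [sum_of_support_subset _ hn _ (by simp)]
    refine sum_congr rfl fun j _ => ?_
    simp only [f, linearCombination_apply, Finsupp.sum_mul, smul_mul_assoc]
  have hfP := mem_of_sum_mul_pow_mem hPQ hP hxQ hxP (f := f)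
    (fun j hj => by simp [f, hv _ hj]) (hsum ▸ hl)
  have hcurry : l.curry = 0 := by
    ext j : 1
    by_cases hj : j < n
    · exact hv _ (hPQ (hfP j hj))
    · exact notMem_support_iff.1 fun h => hj (mem_range.1 (hn h))
  rw [← uncurry_curry l, hcurry]
  rfl

theorem linearIndependent_quotient_orderedMonomial {k : ℕ} {Q : Fin (k + 1) → TwoSidedIdeal R}
    (hQ : Monotone Q) (hCP : ∀ i, IsCompletelyPrime (Q i)) {x : Fin k → R}
    (hxQ : ∀ i, x i ∈ Q i.succ) (hxP : ∀ i, x i ∉ Q i.castSucc) :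
    LinearIndependent K fun a => ((orderedMonomial x a : R) : (Q 0).ringCon.Quotient) := by
  induction k with
  | zero =>
    rw [linearIndependent_unique_iff, Ne, TwoSidedIdeal.coe_quotient_eq_zero_iff]
    exact (hCP 0).1
  | succ k ih =>
    have htail := ih (Q := fun i => Q i.succ) (fun i j hij => hQ (Fin.succ_le_succ_iff.2 hij))
      (fun i => hCP i.succ) (x := Fin.tail x) (fun i => hxQ i.succ)
      (fun i => Fin.succ_castSucc i ▸ hxP i.succ)
    have hprod :=
      linearIndependent_quotient_mul_pow (hQ (Fin.zero_le _)) (hCP 0) (hxQ 0) (hxP 0) htail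
    exact hprod.comp (Fin.consEquiv fun _ => ℕ).symm (Equiv.injective _)

theorem exists_linearIndependent_quotient_orderedMonomial {k : ℕ}
    {Q : Fin (k + 1) → TwoSidedIdeal R} (hQ : StrictMono Q) (hCP : ∀ i, IsCompletelyPrime (Q i)) :
    ∃ x : Fin k → R,
      LinearIndependent K fun a => ((orderedMonomial x a : R) : (Q 0).ringCon.Quotient) := by
  choose x hxQ hxP using fun i : Fin k => SetLike.exists_of_lt (hQ i.castSucc_lt_succ)
  exact ⟨x, linearIndependent_quotient_orderedMonomial hQ.monotone hCP hxQ hxP⟩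

theorem natCast_le_gkDim_quotient_of_strictMono {k : ℕ} {Q : Fin (k + 1) → TwoSidedIdeal R}
    (hQ : StrictMono Q) (hCP : ∀ i, IsCompletelyPrime (Q i)) :
    (k : ℝ≥0∞) ≤ gkDim K (Q 0).ringCon.Quotient := by
  obtain ⟨x, hx⟩ := exists_linearIndependent_quotient_orderedMonomial (K := K) hQ hCP
  refine natCast_le_gkDim_of_linearIndependent (x := fun i => (x i : (Q 0).ringCon.Quotient)) ?_
  have hmap : (orderedMonomial fun i => (x i : (Q 0).ringCon.Quotient)) =
      fun a => ((orderedMonomial x a : R) : (Q 0).ringCon.Quotient) :=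
    funext fun a => (map_orderedMonomial (Q 0).ringCon.mk' x a).symm
  rw [hmap]
  exact hx

theorem natCast_le_gkDim_of_strictMono {k : ℕ} {Q : Fin (k + 1) → TwoSidedIdeal R}
    (hQ : StrictMono Q) (hCP : ∀ i, IsCompletelyPrime (Q i)) : (k : ℝ≥0∞) ≤ gkDim K R := by
  obtain ⟨x, hx⟩ := exists_linearIndependent_quotient_orderedMonomial (K := K) hQ hCP
  refine natCast_le_gkDim_of_linearIndependent (x := x) (linearIndependent_iff.2 fun l hl => ?_)
  exact linearIndependent_quotient_iff.1 hx l (hl ▸ (Q 0).zero_mem)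

theorem wellFoundedGT_completelyPrime
    (h : gkDim K R < ⊤ ∨ ∀ I : TwoSidedIdeal R, I ≠ ⊥ → gkDim K I.ringCon.Quotient < ⊤) :
    WellFoundedGT {P : TwoSidedIdeal R // IsCompletelyPrime P} := by
  refine ⟨RelEmbedding.wellFounded_iff_isEmpty.2 ⟨fun f => ?_⟩⟩
  have hf : StrictMono fun n => (f n : TwoSidedIdeal R) := fun a b hab => f.map_rel_iff.2 hab
  rcases h with hfin | hquot
  · obtain ⟨k, hk⟩ := ENNReal.exists_nat_gt hfin.ne
    exact (natCast_le_gkDim_of_strictMono (Q := fun i : Fin (k + 1) => (f i : TwoSidedIdeal R))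
      (hf.comp Fin.val_strictMono) fun i => (f i).2).not_gt hk
  · have hne : (f 1 : TwoSidedIdeal R) ≠ ⊥ := (bot_le.trans_lt (hf zero_lt_one)).ne'
    obtain ⟨k, hk⟩ := ENNReal.exists_nat_gt (hquot _ hne).ne
    exact (natCast_le_gkDim_quotient_of_strictMono
      (Q := fun i : Fin (k + 1) => (f (i + 1) : TwoSidedIdeal R))
      (fun i j hij => hf (Nat.add_lt_add_right hij 1)) fun i => (f _).2).not_gt hk

end CompletelyPrimeChains

theorem acc_completely_prime_of_finite_or_justInfinite_gkDim_general
    (K : Type) [Field K]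
    (R : Type) [Ring R] [Algebra K R]
    (hyp : gkDim K R < ⊤ ∨
      (gkDim K R = ⊤ ∧ ∀ I : TwoSidedIdeal R, I ≠ ⊥ →
        gkDim K I.ringCon.Quotient < ⊤)) :
    (∀ P : ℕ → TwoSidedIdeal R, Monotone P → (∀ m, IsCompletelyPrime (P m)) →
      ∃ N : ℕ, ∀ m, N ≤ m → P m = P N) ∧
    (IsDomain R → gkDim K R < ⊤ →
      ∀ (m : ℕ) (P : Fin (m + 1) → TwoSidedIdeal R), StrictMono P →
        (∀ i, IsCompletelyPrime (P i)) → (m : ℝ≥0∞) ≤ gkDim K R) := by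
  refine ⟨fun P hP hCP => ?_, fun _ _ m P hP hCP => natCast_le_gkDim_of_strictMono hP hCP⟩
  have := wellFoundedGT_completelyPrime (hyp.imp_right And.right)
  obtain ⟨N, hN⟩ := WellFoundedGT.monotone_chain_condition
    (⟨fun m => ⟨P m, hCP m⟩, hP⟩ : ℕ →o {P : TwoSidedIdeal R // IsCompletelyPrime P})
  exact ⟨N, fun m hm => congrArg Subtype.val (hN m hm).symm⟩

/-- **Theorem.** A `K`-algebra of finite or just infinite GK-dimension has ACC on
completely prime two-sided ideals; for a domain of finite GK-dimension, strictly
ascending chains of completely prime two-sided ideals have length at most `GKdim R`. -/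
theorem acc_completely_prime_of_finite_or_justInfinite_gkDim
    (K : Type) [Field K] [CharZero K]
    (R : Type) [Ring R] [Algebra K R]
    (hyp : gkDim K R < ⊤ ∨
      (gkDim K R = ⊤ ∧ ∀ I : TwoSidedIdeal R, I ≠ ⊥ →
        gkDim K I.ringCon.Quotient < ⊤)) :
    (∀ P : ℕ → TwoSidedIdeal R, Monotone P → (∀ m, IsCompletelyPrime (P m)) →
      ∃ N : ℕ, ∀ m, N ≤ m → P m = P N) ∧
    (IsDomain R → gkDim K R < ⊤ →
      ∀ (m : ℕ) (P : Fin (m + 1) → TwoSidedIdeal R), StrictMono P →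
        (∀ i, IsCompletelyPrime (P i)) → (m : ℝ≥0∞) ≤ gkDim K R) :=
  acc_completely_prime_of_finite_or_justInfinite_gkDim_general K R hyp
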